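/- For every irrational x ∈ (0,1) and every integer n ≥ 1, the principal convergents of the odd-odd continued fraction of x satisfy p_{n−1}·q_n − p_n·q_{n−1} = (−1)^{n+1} · 2 · ε_1·ε_2···ε_{n−1} (where the empty product for n = 1 equals 1). In particular |p_{n−1}·q_n − p_n·q_{n−1}| = 2 for all n ≥ 1. -/

import Mathlib

/-- The odd-odd continued fraction map on `[0,1]`.  For `x ∈ [(k-1)/k, k/(k+1))` with `k ≥ 1`
one has `k = ⌊1/(1-x)⌋`, and the two branches are separated by `(2k-1)/(2k+1)`. -/
noncomputable def oocfT (x : ℝ) : ℝ :=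
  if x = 1 then 1
  else if x < (2 * (⌊1 / (1 - x)⌋ : ℝ) - 1) / (2 * (⌊1 / (1 - x)⌋ : ℝ) + 1) then
    ((⌊1 / (1 - x)⌋ : ℝ) * x - ((⌊1 / (1 - x)⌋ : ℝ) - 1)) /
      ((⌊1 / (1 - x)⌋ : ℝ) - ((⌊1 / (1 - x)⌋ : ℝ) + 1) * x)
  else
    ((⌊1 / (1 - x)⌋ : ℝ) - ((⌊1 / (1 - x)⌋ : ℝ) + 1) * x) /
      ((⌊1 / (1 - x)⌋ : ℝ) * x - ((⌊1 / (1 - x)⌋ : ℝ) - 1))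

/-- OOCF partial quotient `a` of a point `y`: `a = k+1` if `y` is in the lower branch
interval `((k-1)/k, (2k-1)/(2k+1))`, and `a = k` if `y ∈ ((2k-1)/(2k+1), k/(k+1))`,
where `k = ⌊1/(1-y)⌋`. -/
noncomputable def oocfA (y : ℝ) : ℤ :=
  if y < (2 * (⌊1 / (1 - y)⌋ : ℝ) - 1) / (2 * (⌊1 / (1 - y)⌋ : ℝ) + 1) then ⌊1 / (1 - y)⌋ + 1
  else ⌊1 / (1 - y)⌋

/-- OOCF partial quotient `ε` of a point `y`: `ε = -1` on the lower branch interval and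
`ε = 1` on the upper one. -/
noncomputable def oocfE (y : ℝ) : ℤ :=
  if y < (2 * (⌊1 / (1 - y)⌋ : ℝ) - 1) / (2 * (⌊1 / (1 - y)⌋ : ℝ) + 1) then -1 else 1

/-- The OOCF convergents `(p'_n, q'_n, p_n, q_n)` of `x`, defined by
`p'_0 = 1, q'_0 = 0, p_0 = 1, q_0 = 1` and
`p'_n = a_n p_{n-1} - p'_{n-1}`, `q'_n = a_n q_{n-1} - q'_{n-1}`,
`p_n = 2 p'_n + ε_n p_{n-1}`, `q_n = 2 q'_n + ε_n q_{n-1}`,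
where `(a_n, ε_n)` are the partial quotients of `x`, i.e. `a_n = oocfA (oocfT^[n-1] x)`,
`ε_n = oocfE (oocfT^[n-1] x)`. -/
noncomputable def oocfConv (x : ℝ) : ℕ → ℤ × ℤ × ℤ × ℤ
  | 0 => (1, 0, 1, 1)
  | n + 1 =>
    let c := oocfConv x n
    (oocfA (oocfT^[n] x) * c.2.2.1 - c.1,
     oocfA (oocfT^[n] x) * c.2.2.2 - c.2.1,
     2 * (oocfA (oocfT^[n] x) * c.2.2.1 - c.1) + oocfE (oocfT^[n] x) * c.2.2.1,
     2 * (oocfA (oocfT^[n] x) * c.2.2.2 - c.2.1) + oocfE (oocfT^[n] x) * c.2.2.2)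

/-- `n`-th sub-convergent numerator `p'_n`. -/
noncomputable def oocfP' (x : ℝ) (n : ℕ) : ℤ := (oocfConv x n).1

/-- `n`-th sub-convergent denominator `q'_n`. -/
noncomputable def oocfQ' (x : ℝ) (n : ℕ) : ℤ := (oocfConv x n).2.1

/-- `n`-th principal convergent numerator `p_n`. -/
noncomputable def oocfP (x : ℝ) (n : ℕ) : ℤ := (oocfConv x n).2.2.1

/-- `n`-th principal convergent denominator `q_n`. -/
noncomputable def oocfQ (x : ℝ) (n : ℕ) : ℤ := (oocfConv x n).2.2.2

/-- `n`-th pseudo-convergent numerator: `p''_n = p'_n + ε_n p_{n-1}` for `n ≥ 1`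
(with the convention `p''_0 = 0`). -/
noncomputable def oocfP'' (x : ℝ) : ℕ → ℤ
  | 0 => 0
  | n + 1 => oocfP' x (n + 1) + oocfE (oocfT^[n] x) * oocfP x n

/-- `n`-th pseudo-convergent denominator: `q''_n = q'_n + ε_n q_{n-1}` for `n ≥ 1`
(with the convention `q''_0 = 1`). -/
noncomputable def oocfQ'' (x : ℝ) : ℕ → ℤ
  | 0 => 1
  | n + 1 => oocfQ' x (n + 1) + oocfE (oocfT^[n] x) * oocfQ x n

/-! The mixed determinant `p'_n q_n - p_n q'_n` is multiplied by `-ε_{n+1}` at each step of the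
recursion, so it equals `(-1)^n ε_1 ⋯ ε_n`; and the principal determinant
`p_n q_{n+1} - p_{n+1} q_n` is exactly twice it. -/

lemma abs_oocfE (y : ℝ) : |oocfE y| = 1 := by
  unfold oocfE
  split <;> simp

section Recursion

variable (x : ℝ) (n : ℕ)

lemma oocfP'_succ :
    oocfP' x (n + 1) = oocfA (oocfT^[n] x) * oocfP x n - oocfP' x n := rfl

lemma oocfQ'_succ :
    oocfQ' x (n + 1) = oocfA (oocfT^[n] x) * oocfQ x n - oocfQ' x n := rfl

lemma oocfP_succ : oocfP x (n + 1) = 2 * oocfP' x (n + 1) + oocfE (oocfT^[n] x) * oocfP x n :=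
  rfl

lemma oocfQ_succ : oocfQ x (n + 1) = 2 * oocfQ' x (n + 1) + oocfE (oocfT^[n] x) * oocfQ x n :=
  rfl

end Recursion

noncomputable def oocfSubDet (x : ℝ) (n : ℕ) : ℤ := oocfP' x n * oocfQ x n - oocfP x n * oocfQ' x n

lemma oocfSubDet_succ (x : ℝ) (n : ℕ) :
    oocfSubDet x (n + 1) = -oocfE (oocfT^[n] x) * oocfSubDet x n := by
  simp only [oocfSubDet, oocfP_succ, oocfQ_succ, oocfP'_succ, oocfQ'_succ]
  ring

lemma oocfSubDet_eq (x : ℝ) (n : ℕ) :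
    oocfSubDet x n = (-1) ^ n * ∏ i ∈ Finset.range n, oocfE (oocfT^[i] x) := by
  induction n with
  | zero => rfl
  | succ n ih =>
    rw [oocfSubDet_succ, ih, Finset.prod_range_succ, pow_succ]
    ring

lemma oocf_principal_det_succ (x : ℝ) (n : ℕ) :
    oocfP x n * oocfQ x (n + 1) - oocfP x (n + 1) * oocfQ x n = 2 * oocfSubDet x n := by
  simp only [oocfSubDet, oocfP_succ, oocfQ_succ, oocfP'_succ, oocfQ'_succ]
  ring

theorem oocf_principal_convergents_det_general
    (x : ℝ)
    (n : ℕ) (hn : 1 ≤ n) :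
    oocfP x (n - 1) * oocfQ x n - oocfP x n * oocfQ x (n - 1) =
        (-1) ^ (n + 1) * 2 * ∏ i ∈ Finset.range (n - 1), oocfE (oocfT^[i] x) ∧
      |oocfP x (n - 1) * oocfQ x n - oocfP x n * oocfQ x (n - 1)| = 2 := by
  obtain ⟨m, rfl⟩ : ∃ m, n = m + 1 := ⟨n - 1, by omega⟩
  have hdet : oocfP x m * oocfQ x (m + 1) - oocfP x (m + 1) * oocfQ x m =
      (-1) ^ (m + 1 + 1) * 2 * ∏ i ∈ Finset.range m, oocfE (oocfT^[i] x) := by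
    rw [oocf_principal_det_succ, oocfSubDet_eq, pow_add, pow_one]
    ring
  rw [Nat.add_sub_cancel, hdet]
  refine ⟨rfl, ?_⟩
  simp [abs_mul, Finset.abs_prod, abs_oocfE]

/-- For every `n ≥ 1`,
`p_{n-1} q_n - p_n q_{n-1} = (-1)^(n+1) · 2 · ε_1 ⋯ ε_{n-1}`; in particular the
absolute value of the left-hand side is `2`. -/
theorem oocf_principal_convergents_det
    (x : ℝ) (hx : x ∈ Set.Ioo (0 : ℝ) 1) (hirr : Irrational x)
    (n : ℕ) (hn : 1 ≤ n) :
    oocfP x (n - 1) * oocfQ x n - oocfP x n * oocfQ x (n - 1) =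
        (-1) ^ (n + 1) * 2 * ∏ i ∈ Finset.range (n - 1), oocfE (oocfT^[i] x) ∧
      |oocfP x (n - 1) * oocfQ x n - oocfP x n * oocfQ x (n - 1)| = 2 :=
  oocf_principal_convergents_det_general x n hn
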